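/- arXiv:0806.0120 — 2 statements merged into one kernel-verified Lean document; each statement's English description precedes it below -/
import Mathlib

section
/- For any finite family F of functions from a set X to a set Z with |Z| ≥ 2 and |X| ≥ 2: if F is two-universal, then for every probability distribution P on X and independent uniformly random f ∈ F, the collision probability of (f, f(x)) with x ~ P satisfies Pr[f(x) = f(x')] ≤ max_x P(x) + 1/|Z|, where x, x' are i.i.d. from P. -/
/-!
Averaging over `f` first, the collision probability is `∑ₓ ∑ₓ' P x P x' r(x, x')`, where
`r(x, x')` is the fraction of the family on which `x` and `x'` collide. Two-universality and
`r ≤ 1` give `r(x, x') ≤ [x = x'] + 1/|Z|`, so the sum is at most `∑ₓ P x ^ 2 + 1/|Z|`, and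
`∑ₓ P x ^ 2 ≤ maxₓ P x · ∑ₓ P x = maxₓ P x`.
-/

open Finset

section CollisionBound

variable {X : Type*} [Fintype X] [Nonempty X]

theorem sum_mul_self_le_sup' (P : X → ℝ) (hP : ∀ x, 0 ≤ P x) (hPsum : ∑ x, P x = 1) :
    ∑ x, P x * P x ≤ univ.sup' univ_nonempty P :=
  calc ∑ x, P x * P x ≤ ∑ x, univ.sup' univ_nonempty P * P x :=
        sum_le_sum fun x _ => mul_le_mul_of_nonneg_right (le_sup' P (mem_univ x)) (hP x)
    _ = univ.sup' univ_nonempty P := by rw [← mul_sum, hPsum, mul_one]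

theorem sum_sum_mul_mul_le_sup'_add [DecidableEq X] (P : X → ℝ) (hP : ∀ x, 0 ≤ P x)
    (hPsum : ∑ x, P x = 1) (r : X → X → ℝ) {ε : ℝ} (hε : 0 ≤ ε)
    (hr_le_one : ∀ x x', r x x' ≤ 1) (hr_offDiag : ∀ x x', x ≠ x' → r x x' ≤ ε) :
    ∑ x, ∑ x', P x * P x' * r x x' ≤ univ.sup' univ_nonempty P + ε := by
  have hr : ∀ x x', r x x' ≤ (if x = x' then 1 else 0) + ε := by
    intro x x'
    split_ifs with h
    · linarith [hr_le_one x x']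
    · simpa using hr_offDiag x x' h
  calc ∑ x, ∑ x', P x * P x' * r x x'
      ≤ ∑ x, ∑ x', P x * P x' * ((if x = x' then 1 else 0) + ε) :=
        sum_le_sum fun x _ => sum_le_sum fun x' _ =>
          mul_le_mul_of_nonneg_left (hr x x') (mul_nonneg (hP x) (hP x'))
    _ = ∑ x, P x * P x + ε * (∑ x, P x) * (∑ x, P x) := by
        simp only [mul_add, mul_ite, mul_one, mul_zero, sum_add_distrib, sum_ite_eq,
          mem_univ, sum_mul, mul_sum]
        congr 1
        exact sum_congr rfl fun x _ => sum_congr rfl fun x' _ => by ring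
    _ ≤ univ.sup' univ_nonempty P + ε := by
        rw [hPsum, mul_one, mul_one]
        gcongr
        exact sum_mul_self_le_sup' P hP hPsum

end CollisionBound

section CollisionRate

open scoped Classical

/-- Zero for an empty family, where the division is by `0`. -/
noncomputable def collisionRate {X Z ι : Type*} [Fintype ι] (f : ι → X → Z) (x x' : X) :
    ℝ :=
  (#{i | f i x = f i x'} : ℝ) / Fintype.card ι

variable {X Z ι : Type*} [Fintype ι] (f : ι → X → Z)

theorem collisionRate_le_one (x x' : X) : collisionRate f x x' ≤ 1 :=
  div_le_one_of_le₀ (by exact_mod_cast card_filter_le univ fun i => f i x = f i x')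
    (Nat.cast_nonneg _)

theorem one_div_card_mul_sum_collisions [Fintype X] (P : X → ℝ) :
    (1 / (Fintype.card ι : ℝ)) *
        ∑ i, ∑ x, ∑ x', P x * P x' * (if f i x = f i x' then 1 else 0)
      = ∑ x, ∑ x', P x * P x' * collisionRate f x x' := by
  simp only [collisionRate, div_eq_mul_inv, one_mul, mul_sum, ← sum_boole]
  rw [sum_comm]
  refine sum_congr rfl fun x _ => ?_
  rw [sum_comm]
  refine sum_congr rfl fun x' _ => ?_
  simp only [← mul_sum]
  ring

end CollisionRate

open scoped Classical BigOperators

theorem stmt_1_general {X Z ι : Type*} [Fintype X] [Fintype Z] [Fintype ι] [Nonempty X]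
    (f : ι → X → Z)
    (huniv : ∀ x x' : X, x ≠ x' →
      ((Finset.univ.filter fun i => f i x = f i x').card : ℝ) / (Fintype.card ι : ℝ)
        ≤ 1 / (Fintype.card Z : ℝ))
    (P : X → ℝ) (hP : ∀ x, 0 ≤ P x) (hPsum : ∑ x, P x = 1) :
    (1 / (Fintype.card ι : ℝ)) *
        ∑ i, ∑ x, ∑ x', P x * P x' * (if f i x = f i x' then 1 else 0)
      ≤ Finset.univ.sup' Finset.univ_nonempty P + 1 / (Fintype.card Z : ℝ) := by
  rw [one_div_card_mul_sum_collisions]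
  exact sum_sum_mul_mul_le_sup'_add P hP hPsum _ (by positivity) (collisionRate_le_one f) huniv

/-- If a finite family `f : ι → X → Z` is two-universal, then for any distribution `P`
on `X`, the collision probability of `(f, f(x))` with `x ~ P`, `f` uniform, i.e.
`Pr[f(x) = f(x')]` for `x, x'` i.i.d. `~ P`, is at most `max_x P x + 1/|Z|`. -/
theorem stmt_1 {X Z ι : Type*} [Fintype X] [Fintype Z] [Fintype ι] [Nonempty ι] [Nonempty X]
    (hX : 2 ≤ Fintype.card X) (hZ : 2 ≤ Fintype.card Z)
    (f : ι → X → Z)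
    (huniv : ∀ x x' : X, x ≠ x' →
      ((Finset.univ.filter fun i => f i x = f i x').card : ℝ) / (Fintype.card ι : ℝ)
        ≤ 1 / (Fintype.card Z : ℝ))
    (P : X → ℝ) (hP : ∀ x, 0 ≤ P x) (hPsum : ∑ x, P x = 1) :
    (1 / (Fintype.card ι : ℝ)) *
        ∑ i, ∑ x, ∑ x', P x * P x' * (if f i x = f i x' then 1 else 0)
      ≤ Finset.univ.sup' Finset.univ_nonempty P + 1 / (Fintype.card Z : ℝ) :=
  stmt_1_general f huniv P hP hPsum
end

section
/- Leftover hash lemma (classical): let X be a random variable on {0,1}^n, E a finite random variable, F uniform on a two-universal family of functions from {0,1}^n to {0,1}^ℓ, independent of (X,E). Then (1/2)‖P_{F(X) F E} − U_ℓ × P_{F E}‖₁ ≤ (1/2)·2^{−(H_min(X|E) − ℓ)/2}, where U_ℓ is uniform on {0,1}^ℓ. In particular, if ℓ ≤ H_min(X|E) − 2 log₂(1/ε_PA) then the extracted key is ε'-close to uniform with ε' ≤ ε_PA²/2 ≤ ε_PA. -/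
/-!
For a fixed value `e` of the side information, write `T_i(z)` for the mass that `P(·, e)` sends
to `z` under the `i`-th hash function. Expanding `∑_z T_i(z)²` as a sum over colliding pairs,
two-universality bounds the average of `∑_z (T_i(z) - P_E(e)/2^ℓ)²` by the collision
probability `∑_x P(x, e)²`, and Cauchy–Schwarz turns this into a bound
`√(2^ℓ ∑_x P(x, e)²)` on the `L¹` distance from uniform. Finally
`∑_x P(x, e)² ≤ max_x P(x, e) · P_E(e)`, and Cauchy–Schwarz over `e` gives
`√(2^ℓ ∑_e max_x P(x, e)) = 2^{-(H_min(X|E) - ℓ)/2}`.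
-/

open Finset Real

lemma sum_sq_sub_mean {Z : Type*} [Fintype Z] [Nonempty Z] {a : Z → ℝ} {s : ℝ}
    (hs : ∑ z, a z = s) :
    ∑ z, (a z - s / Fintype.card Z) ^ 2 = ∑ z, a z ^ 2 - s ^ 2 / Fintype.card Z := by
  have hM : (Fintype.card Z : ℝ) ≠ 0 := by positivity
  simp_rw [sub_sq, sum_add_distrib, sum_sub_distrib, ← sum_mul, ← mul_sum, hs, sum_const,
    card_univ, nsmul_eq_mul]
  field_simp
  ring

lemma sum_abs_le_sqrt_card_mul_sum_sq {α : Type*} [Fintype α] (a : α → ℝ) :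
    ∑ q, |a q| ≤ √(Fintype.card α * ∑ q, a q ^ 2) := by
  apply le_sqrt_of_sq_le
  simpa [sq_abs] using sq_sum_le_card_mul_sum_sq (s := univ) (f := fun q => |a q|)

section HashFamily

variable {ι X Z : Type*} [Fintype ι] [Fintype X] [DecidableEq Z]

def IsUniversalHashFamily (f : ι → X → Z) (ε : ℝ) : Prop :=
  ∀ x x' : X, x ≠ x' →
    ((univ.filter fun i => f i x = f i x').card : ℝ) / (Fintype.card ι : ℝ) ≤ ε

def fiberSum (h : X → Z) (g : X → ℝ) (z : Z) : ℝ :=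
  ∑ x, if h x = z then g x else 0

lemma sum_fiberSum [Fintype Z] (h : X → Z) (g : X → ℝ) : ∑ z, fiberSum h g z = ∑ x, g x := by
  unfold fiberSum
  rw [sum_comm]
  simp

lemma sum_fiberSum_sq [Fintype Z] (h : X → Z) (g : X → ℝ) :
    ∑ z, fiberSum h g z ^ 2 = ∑ x, ∑ x', if h x = h x' then g x * g x' else 0 := by
  simp_rw [fiberSum, sq, sum_mul_sum, ite_zero_mul_ite_zero]
  rw [sum_comm]
  refine sum_congr rfl fun x _ => ?_
  rw [sum_comm]
  refine sum_congr rfl fun x' _ => ?_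
  split_ifs with hxx'
  · simp [hxx']
  · exact sum_eq_zero fun z _ => if_neg fun ⟨hz, hz'⟩ => hxx' (hz.trans hz'.symm)

variable {f : ι → X → Z} {g : X → ℝ}

lemma sum_sum_collision_le [Nonempty ι] {ε : ℝ} (hf : IsUniversalHashFamily f ε)
    (hε : 0 ≤ ε) (hg : ∀ x, 0 ≤ g x) :
    ∑ i, ∑ x, ∑ x', (if f i x = f i x' then g x * g x' else 0)
      ≤ Fintype.card ι * ∑ x, g x ^ 2 + Fintype.card ι * ε * (∑ x, g x) ^ 2 := by
  classical
  set N : ℝ := (Fintype.card ι : ℝ) with hNdef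
  have hN : 0 < N := by positivity
  have hcount : ∀ x x', ((univ.filter fun i => f i x = f i x').card : ℝ) * (g x * g x')
      ≤ (if x = x' then N * (g x * g x') else 0) + N * ε * (g x * g x') := by
    intro x x'
    have hgg : 0 ≤ g x * g x' := mul_nonneg (hg x) (hg x')
    have hcardN : ((univ.filter fun i => f i x = f i x').card : ℝ) ≤ N := by
      rw [hNdef]
      exact_mod_cast (card_filter_le univ _).trans_eq card_univ
    split_ifs with hxx'
    · have hdiag := mul_le_mul_of_nonneg_right hcardN hgg
      have hnonneg : 0 ≤ N * ε * (g x * g x') := by positivity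
      linarith
    · have hoffdiag := mul_le_mul_of_nonneg_right ((div_le_iff₀ hN).1 (hf x x' hxx')) hgg
      linarith
  calc ∑ i, ∑ x, ∑ x', (if f i x = f i x' then g x * g x' else 0)
      = ∑ x, ∑ x', ((univ.filter fun i => f i x = f i x').card : ℝ) * (g x * g x') := by
        rw [sum_comm]
        refine sum_congr rfl fun x _ => ?_
        rw [sum_comm]
        refine sum_congr rfl fun x' _ => ?_
        rw [← sum_filter, sum_const, nsmul_eq_mul]
    _ ≤ ∑ x, ∑ x', ((if x = x' then N * (g x * g x') else 0) + N * ε * (g x * g x')) :=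
        sum_le_sum fun x _ => sum_le_sum fun x' _ => hcount x x'
    _ = N * ∑ x, g x ^ 2 + N * ε * (∑ x, g x) ^ 2 := by
        simp only [sum_add_distrib, sum_ite_eq, mem_univ, if_true, ← mul_sum, sq, sum_mul_sum]

lemma sum_sum_sq_fiberSum_sub_le [Fintype Z] [Nonempty ι] [Nonempty Z]
    (hf : IsUniversalHashFamily f (1 / Fintype.card Z)) (hg : ∀ x, 0 ≤ g x) :
    ∑ i, ∑ z, (fiberSum (f i) g z - (∑ x, g x) / Fintype.card Z) ^ 2
      ≤ Fintype.card ι * ∑ x, g x ^ 2 := by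
  have hcoll := sum_sum_collision_le hf (by positivity) hg
  rw [sum_congr rfl fun i _ => sum_sq_sub_mean (sum_fiberSum (f i) g)]
  simp_rw [sum_fiberSum_sq, sum_sub_distrib, sum_const, card_univ, nsmul_eq_mul]
  linarith [show (Fintype.card ι : ℝ) * (1 / Fintype.card Z) * (∑ x, g x) ^ 2
    = Fintype.card ι * ((∑ x, g x) ^ 2 / Fintype.card Z) by ring]

theorem sum_sum_abs_fiberSum_sub_le [Fintype Z] [Nonempty ι] [Nonempty Z]
    (hf : IsUniversalHashFamily f (1 / Fintype.card Z)) (hg : ∀ x, 0 ≤ g x) :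
    ∑ i, ∑ z, |(1 / (Fintype.card ι : ℝ)) * fiberSum (f i) g z -
        (1 / Fintype.card Z) * (1 / (Fintype.card ι : ℝ)) * ∑ x, g x|
      ≤ √(Fintype.card Z * ∑ x, g x ^ 2) := by
  set N : ℝ := (Fintype.card ι : ℝ) with hNdef
  set M : ℝ := (Fintype.card Z : ℝ) with hMdef
  have hN : 0 < N := by positivity
  have hdev : ∑ i, ∑ z, |fiberSum (f i) g z - (∑ x, g x) / M| ≤ N * √(M * ∑ x, g x ^ 2) := by
    calc ∑ i, ∑ z, |fiberSum (f i) g z - (∑ x, g x) / M|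
        ≤ √((N * M) * ∑ i, ∑ z, (fiberSum (f i) g z - (∑ x, g x) / M) ^ 2) := by
          simpa [Fintype.sum_prod_type, hNdef, hMdef] using sum_abs_le_sqrt_card_mul_sum_sq
            fun q : ι × Z => fiberSum (f q.1) g q.2 - (∑ x, g x) / M
      _ ≤ √((N * M) * (N * ∑ x, g x ^ 2)) := by
          gcongr
          exact sum_sum_sq_fiberSum_sub_le hf hg
      _ = N * √(M * ∑ x, g x ^ 2) := by
          rw [show N * M * (N * ∑ x, g x ^ 2) = N ^ 2 * (M * ∑ x, g x ^ 2) by ring,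
            sqrt_mul (by positivity), sqrt_sq hN.le]
  have hscale : ∀ i z, |(1 / N) * fiberSum (f i) g z - (1 / M) * (1 / N) * ∑ x, g x|
      = (1 / N) * |fiberSum (f i) g z - (∑ x, g x) / M| := by
    intro i z
    rw [← abs_of_pos (one_div_pos.2 hN), ← abs_mul, abs_of_pos (one_div_pos.2 hN)]
    ring_nf
  calc ∑ i, ∑ z, |(1 / N) * fiberSum (f i) g z - (1 / M) * (1 / N) * ∑ x, g x|
      = (1 / N) * ∑ i, ∑ z, |fiberSum (f i) g z - (∑ x, g x) / M| := by
        simp_rw [hscale, mul_sum]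
    _ ≤ (1 / N) * (N * √(M * ∑ x, g x ^ 2)) := by gcongr
    _ = √(M * ∑ x, g x ^ 2) := by field_simp

end HashFamily

lemma sum_sq_le_iSup_mul_sum {X : Type*} [Fintype X] {g : X → ℝ} (hg : ∀ x, 0 ≤ g x) :
    ∑ x, g x ^ 2 ≤ (⨆ x, g x) * ∑ x, g x := by
  rw [mul_sum]
  refine sum_le_sum fun x _ => ?_
  rw [sq]
  exact mul_le_mul_of_nonneg_right (le_ciSup (Finite.bddAbove_range g) x) (hg x)

lemma sum_sqrt_sum_sq_le {X E : Type*} [Fintype X] [Fintype E] {P : X × E → ℝ}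
    (hP : ∀ p, 0 ≤ P p) :
    ∑ e, √(∑ x, P (x, e) ^ 2) ≤ √((∑ e, ⨆ x, P (x, e)) * ∑ p, P p) := by
  have hsup : ∀ e, 0 ≤ ⨆ x, P (x, e) := fun e => Real.iSup_nonneg fun x => hP (x, e)
  calc ∑ e, √(∑ x, P (x, e) ^ 2)
      ≤ ∑ e, √(⨆ x, P (x, e)) * √(∑ x, P (x, e)) := by
        refine sum_le_sum fun e _ => ?_
        rw [← sqrt_mul (hsup e)]
        exact sqrt_le_sqrt (sum_sq_le_iSup_mul_sum fun x => hP (x, e))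
    _ ≤ √(∑ e, ⨆ x, P (x, e)) * √(∑ e, ∑ x, P (x, e)) :=
        sum_sqrt_mul_sqrt_le _ hsup fun e => sum_nonneg fun x _ => hP (x, e)
    _ = √((∑ e, ⨆ x, P (x, e)) * ∑ p, P p) := by
        rw [← sqrt_mul (sum_nonneg fun e _ => hsup e), Fintype.sum_prod_type, sum_comm]

lemma two_rpow_logb_add_div_two {S : ℝ} (hS : 0 < S) (t : ℝ) :
    (2 : ℝ) ^ ((logb 2 S + t) / 2) = √(S * 2 ^ t) := by
  rw [div_eq_mul_one_div, rpow_mul (by norm_num), rpow_add (by norm_num),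
    rpow_logb (by norm_num) (by norm_num) hS, sqrt_eq_rpow]

/-- Leftover hash lemma (classical): hashing `X` with a uniformly random function `F`
from a two-universal family from `{0,1}^n` to `{0,1}^ℓ` (independent of `(X,E)`) yields a
key whose distance from uniform, given `F` and `E`, is at most
`(1/2)·2^{-(H_min(X|E) − ℓ)/2}`, where `H_min(X|E) = -log₂ ∑_e max_x P(x,e)`. -/
theorem stmt_15 {ℰ ι : Type*} [Fintype ℰ] [Fintype ι] [Nonempty ι] (n ℓ : ℕ)
    (f : ι → (Fin n → Bool) → (Fin ℓ → Bool))
    (huniv : ∀ x x' : Fin n → Bool, x ≠ x' →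
      ((Finset.univ.filter fun i => f i x = f i x').card : ℝ) / (Fintype.card ι : ℝ)
        ≤ 1 / 2 ^ ℓ)
    (P : (Fin n → Bool) × ℰ → ℝ) (hP : ∀ p, 0 ≤ P p) (hPsum : ∑ p, P p = 1) :
    (1 / 2) * ∑ i : ι, ∑ z : Fin ℓ → Bool, ∑ e : ℰ,
        |(1 / (Fintype.card ι : ℝ)) * (∑ x, if f i x = z then P (x, e) else 0) -
          (1 / 2 ^ ℓ) * (1 / (Fintype.card ι : ℝ)) * (∑ x, P (x, e))|
      ≤ (1 / 2) * (2 : ℝ) ^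
          (-((-Real.logb 2 (∑ e : ℰ, ⨆ x : Fin n → Bool, P (x, e))) - (ℓ : ℝ)) / 2) := by
  set S := ∑ e : ℰ, ⨆ x : Fin n → Bool, P (x, e)
  have hcard : (Fintype.card (Fin ℓ → Bool) : ℝ) = 2 ^ ℓ := by simp
  have hS : 0 < S := by
    obtain ⟨q, -, hq⟩ := exists_lt_of_sum_lt (s := univ) (f := 0) (g := P) (by simp [hPsum])
    calc 0 < ⨆ x, P (x, q.2) :=
          hq.trans_le (le_ciSup (Finite.bddAbove_range fun x => P (x, q.2)) q.1)
      _ ≤ S := single_le_sum (fun e _ => Real.iSup_nonneg fun x => hP (x, e)) (mem_univ q.2)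
  have hfiber : ∀ e, ∑ i, ∑ z : Fin ℓ → Bool,
      |(1 / (Fintype.card ι : ℝ)) * (∑ x, if f i x = z then P (x, e) else 0) -
          (1 / 2 ^ ℓ) * (1 / (Fintype.card ι : ℝ)) * (∑ x, P (x, e))|
        ≤ √(2 ^ ℓ) * √(∑ x, P (x, e) ^ 2) := fun e => by
    rw [← sqrt_mul (by positivity), ← hcard]
    exact sum_sum_abs_fiberSum_sub_le (hcard ▸ huniv) fun x => hP (x, e)
  rw [show -(-logb 2 S - ℓ) / 2 = (logb 2 S + ℓ) / 2 by ring, two_rpow_logb_add_div_two hS,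
    rpow_natCast]
  gcongr
  calc ∑ i, ∑ z, ∑ e, _
      = ∑ e, ∑ i, ∑ z : Fin ℓ → Bool, _ := by
        simp_rw [sum_comm (γ := ℰ)]
    _ ≤ ∑ e, √(2 ^ ℓ) * √(∑ x, P (x, e) ^ 2) := sum_le_sum fun e _ => hfiber e
    _ ≤ √(2 ^ ℓ) * √(S * ∑ p, P p) := by
        rw [← mul_sum]
        exact mul_le_mul_of_nonneg_left (sum_sqrt_sum_sq_le hP) (sqrt_nonneg _)
    _ = √(S * 2 ^ ℓ) := by rw [hPsum, mul_one, ← sqrt_mul (by positivity), mul_comm]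
end
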